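/- (Odd-definiteness of the static Skyrme model.) Let 𝕃 be a real symmetric positive semidefinite 3×3 matrix, let T be its Skyrme stress tensor, and let W ∈ ℝ³ be a unit vector such that 𝕃·Y = 0 for every vector Y ∈ ℝ³ orthogonal to W. Then WᵀT W ≥ 0, with equality if and only if 𝕃 = 0. -/

import Mathlib

open Matrix

/-- The Skyrme stress tensor of a real 3×3 matrix `L`:
`T = L - ½(tr L)·I - ½(L·L - ¼ tr(L·L)·I - (tr L)·L + ¼ (tr L)²·I)`. -/
noncomputable def skyrmeStress (L : Matrix (Fin 3) (Fin 3) ℝ) : Matrix (Fin 3) (Fin 3) ℝ :=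
  L - (L.trace / 2) • (1 : Matrix (Fin 3) (Fin 3) ℝ)
    - (1 / 2 : ℝ) • (L * L - ((L * L).trace / 4) • (1 : Matrix (Fin 3) (Fin 3) ℝ)
        - L.trace • L + (L.trace ^ 2 / 4) • (1 : Matrix (Fin 3) (Fin 3) ℝ))

/-! Since `𝕃` is symmetric and kills `W^⊥`, it is the rank-one matrix `l • W Wᵀ` with
`l = Wᵀ 𝕃 W ≥ 0`. Such a matrix satisfies `𝕃 * 𝕃 = (tr 𝕃) • 𝕃`, which makes the quadratic part of
the stress tensor cancel: `T = 𝕃 - ½ (tr 𝕃) I`, so `Wᵀ T W = l - l / 2 = l / 2`. -/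

namespace Matrix

variable {n R : Type*} [Fintype n] [CommRing R]

theorem mulVec_eq_dotProduct_smul_of_orthogonal_ker {L : Matrix n n R} {W : n → R}
    (hW : W ⬝ᵥ W = 1) (hker : ∀ Y, Y ⬝ᵥ W = 0 → L *ᵥ Y = 0) (Y : n → R) :
    L *ᵥ Y = (Y ⬝ᵥ W) • L *ᵥ W := by
  have hperp : (Y - (Y ⬝ᵥ W) • W) ⬝ᵥ W = 0 := by
    rw [sub_dotProduct, smul_dotProduct, hW, smul_eq_mul, mul_one, sub_self]
  simpa only [mulVec_sub, mulVec_smul, sub_eq_zero] using hker _ hperp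

theorem eq_vecMulVec_of_orthogonal_ker {L : Matrix n n R} {W : n → R}
    (hW : W ⬝ᵥ W = 1) (hker : ∀ Y, Y ⬝ᵥ W = 0 → L *ᵥ Y = 0) :
    L = vecMulVec (L *ᵥ W) W := by
  classical
  refine ext_of_mulVec_single fun j => ?_
  rw [mulVec_eq_dotProduct_smul_of_orthogonal_ker hW hker, vecMulVec_mulVec, dotProduct_comm]
  exact (op_smul_eq_smul _ _).symm

theorem IsSymm.eq_smul_vecMulVec_of_orthogonal_ker {L : Matrix n n R} (hL : L.IsSymm)
    {W : n → R} (hW : W ⬝ᵥ W = 1) (hker : ∀ Y, Y ⬝ᵥ W = 0 → L *ᵥ Y = 0) :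
    L = (W ⬝ᵥ L *ᵥ W) • vecMulVec W W := by
  have hrank := eq_vecMulVec_of_orthogonal_ker hW hker
  have hLW : L *ᵥ W = (W ⬝ᵥ L *ᵥ W) • W := by
    have hflip : vecMulVec (L *ᵥ W) W = vecMulVec W (L *ᵥ W) := by
      rw [← transpose_vecMulVec (L *ᵥ W) W, ← hrank, hL.eq]
    simpa [vecMulVec_mulVec, hW, dotProduct_comm] using congrArg (· *ᵥ W) hflip
  rw [← smul_vecMulVec, ← hLW]
  exact hrank

end Matrix

theorem skyrmeStress_of_mul_self_eq_trace_smul {L : Matrix (Fin 3) (Fin 3) ℝ}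
    (hL : L * L = L.trace • L) : skyrmeStress L = L - (L.trace / 2) • 1 := by
  rw [skyrmeStress, hL, trace_smul, smul_eq_mul]
  module

theorem dotProduct_skyrmeStress_smul_vecMulVec_mulVec {W : Fin 3 → ℝ} (hW : W ⬝ᵥ W = 1)
    (l : ℝ) : W ⬝ᵥ skyrmeStress (l • vecMulVec W W) *ᵥ W = l / 2 := by
  have htr : (l • vecMulVec W W).trace = l := by
    rw [trace_smul, trace_vecMulVec, hW, smul_eq_mul, mul_one]
  have hsq : l • vecMulVec W W * l • vecMulVec W W =
      (l • vecMulVec W W).trace • l • vecMulVec W W := by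
    rw [htr, smul_mul_smul_comm, vecMulVec_mul_vecMulVec, hW, one_smul, mul_smul]
  rw [skyrmeStress_of_mul_self_eq_trace_smul hsq, htr, sub_mulVec, smul_mulVec, smul_mulVec,
    vecMulVec_mulVec, one_mulVec, hW, MulOpposite.op_one, one_smul, dotProduct_sub, dotProduct_smul,
    dotProduct_smul, hW, smul_eq_mul, smul_eq_mul]
  ring

theorem stmt5_general (𝕃 : Matrix (Fin 3) (Fin 3) ℝ) (hpsd : 𝕃.PosSemidef)
    (W : Fin 3 → ℝ) (hW : W ⬝ᵥ W = 1)
    (hker : ∀ Y : Fin 3 → ℝ, Y ⬝ᵥ W = 0 → 𝕃.mulVec Y = 0) :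
    0 ≤ W ⬝ᵥ (skyrmeStress 𝕃).mulVec W ∧
      (W ⬝ᵥ (skyrmeStress 𝕃).mulVec W = 0 ↔ 𝕃 = 0) := by
  have hL :=
    (isHermitian_iff_isSymm.mp hpsd.isHermitian).eq_smul_vecMulVec_of_orthogonal_ker hW hker
  obtain ⟨l, hl, rfl⟩ : ∃ l : ℝ, 0 ≤ l ∧ 𝕃 = l • vecMulVec W W :=
    ⟨_, by simpa using hpsd.dotProduct_mulVec_nonneg W, hL⟩
  have hW0 : W ≠ 0 := by rintro rfl; simp at hW
  rw [dotProduct_skyrmeStress_smul_vecMulVec_mulVec hW, smul_eq_zero, vecMulVec_eq_zero]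
  constructor
  · positivity
  · simp [hW0]

theorem stmt5 (𝕃 : Matrix (Fin 3) (Fin 3) ℝ) (hsymm : 𝕃.IsSymm) (hpsd : 𝕃.PosSemidef)
    (W : Fin 3 → ℝ) (hW : W ⬝ᵥ W = 1)
    (hker : ∀ Y : Fin 3 → ℝ, Y ⬝ᵥ W = 0 → 𝕃.mulVec Y = 0) :
    0 ≤ W ⬝ᵥ (skyrmeStress 𝕃).mulVec W ∧
      (W ⬝ᵥ (skyrmeStress 𝕃).mulVec W = 0 ↔ 𝕃 = 0) :=
  stmt5_general 𝕃 hpsd W hW hker
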